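/- arXiv:2411.04038 — 2 statements merged into one kernel-verified Lean document; each statement's English description precedes it below -/
import Mathlib

section
/- Let x : [T,T⁺) → ℝ be differentiable with x(T) > 0, T < T⁺ < ∞, and x'(t) ≥ −x(t)² for all t. Then for all t ∈ [T,T⁺), x(t) ≥ x(T)/(1 + x(T)(t−T)) ≥ (1/2) min(x(T), 1/(T⁺−T)) > 0. -/
/-- Lower bound for a positive solution of `x' ≥ -x²` on `[T, T⁺)`. -/
theorem riccati_lower_bound
    (T Tp : ℝ) (hT : T < Tp)
    (x x' : ℝ → ℝ)
    (hderiv : ∀ t ∈ Set.Ico T Tp, HasDerivAt x (x' t) t)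
    (hineq : ∀ t ∈ Set.Ico T Tp, -(x t) ^ 2 ≤ x' t)
    (hx0 : 0 < x T) :
    ∀ t ∈ Set.Ico T Tp,
      x T / (1 + x T * (t - T)) ≤ x t ∧
      (1/2) * min (x T) (1 / (Tp - T)) ≤ x T / (1 + x T * (t - T)) ∧
      0 < (1/2) * min (x T) (1 / (Tp - T)) := by
  have hcont : ∀ t ∈ Set.Ico T Tp, ContinuousAt x t := fun t ht => (hderiv t ht).continuousAt
  -- comparison lemma on intervals where x is positive
  have comp : ∀ b, T ≤ b → b < Tp → (∀ s ∈ Set.Icc T b, 0 < x s) →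
      ∀ t ∈ Set.Icc T b, x T / (1 + x T * (t - T)) ≤ x t := by
    intro b hTb hbTp hpos t ht
    have hsub : Set.Icc T b ⊆ Set.Ico T Tp := fun s hs => ⟨hs.1, lt_of_le_of_lt hs.2 hbTp⟩
    have hvd : ∀ s ∈ Set.Icc T b,
        HasDerivAt (fun s => (x s)⁻¹ - s) (-(x' s) / (x s) ^ 2 - 1) s := by
      intro s hs
      exact ((hderiv s (hsub hs)).inv (hpos s hs).ne').sub (hasDerivAt_id s)
    have hanti : AntitoneOn (fun s => (x s)⁻¹ - s) (Set.Icc T b) := by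
      apply antitoneOn_of_deriv_nonpos (convex_Icc T b)
      · exact fun s hs => ((hvd s hs).continuousAt).continuousWithinAt
      · intro s hs
        rw [interior_Icc] at hs
        exact (hvd s (Set.mem_Icc_of_Ioo hs)).differentiableAt.differentiableWithinAt
      · intro s hs
        rw [interior_Icc] at hs
        have hs' : s ∈ Set.Icc T b := Set.mem_Icc_of_Ioo hs
        rw [(hvd s hs').deriv]
        have h2 : (0:ℝ) < (x s) ^ 2 := pow_pos (hpos s hs') 2
        rw [sub_nonpos, div_le_one h2]
        linarith [hineq s (hsub hs')]
    have hv := hanti (Set.left_mem_Icc.mpr hTb) ht ht.1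
    -- hv : (x t)⁻¹ - t ≤ (x T)⁻¹ - T
    have hxt : 0 < x t := hpos t ht
    have hden : 0 < 1 + x T * (t - T) := by
      have : 0 ≤ t - T := sub_nonneg.mpr ht.1
      positivity
    rw [div_le_iff₀ hden]
    have h1 : (x t)⁻¹ ≤ (x T)⁻¹ + (t - T) := by dsimp at hv; linarith
    have h2 := mul_le_mul_of_nonneg_left h1 (mul_pos hxt hx0).le
    have e1 : x t * x T * (x t)⁻¹ = x T := by field_simp
    have e2 : x t * x T * ((x T)⁻¹ + (t - T)) = x t * (1 + x T * (t - T)) := by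
      field_simp
    nlinarith [h2, e1, e2]
  -- positivity everywhere
  have hposall : ∀ t ∈ Set.Ico T Tp, 0 < x t := by
    by_contra h
    push_neg at h
    obtain ⟨t1, ht1, hxt1⟩ := h
    set B := {t | t ∈ Set.Icc T t1 ∧ x t ≤ 0} with hB
    have hBne : B.Nonempty := ⟨t1, ⟨ht1.1, le_rfl⟩, hxt1⟩
    have hBbd : BddBelow B := ⟨T, fun s hs => hs.1.1⟩
    set t0 := sInf B with ht0
    have ht0l : T ≤ t0 := le_csInf hBne fun s hs => hs.1.1
    have ht0r : t0 ≤ t1 := csInf_le hBbd ⟨⟨ht1.1, le_rfl⟩, hxt1⟩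
    have ht0Tp : t0 < Tp := lt_of_le_of_lt ht0r ht1.2
    obtain ⟨u, hu_anti, hu_tend, hu_mem⟩ := exists_seq_tendsto_sInf hBne hBbd
    have hxt0 : x t0 ≤ 0 :=
      le_of_tendsto ((hcont t0 ⟨ht0l, ht0Tp⟩).tendsto.comp hu_tend)
        (Filter.Eventually.of_forall fun n => (hu_mem n).2)
    have hTt0 : T < t0 := lt_of_le_of_ne ht0l (by intro heq; have h' := hxt0; rw [← heq] at h'; linarith)
    have hpos' : ∀ s ∈ Set.Ico T t0, 0 < x s := by
      intro s hs
      by_contra hns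
      push_neg at hns
      have hsB : s ∈ B := ⟨⟨hs.1, le_trans hs.2.le ht0r⟩, hns⟩
      exact absurd (csInf_le hBbd hsB) (not_le.mpr hs.2)
    have hden0 : 0 < 1 + x T * (t0 - T) := by
      have : 0 ≤ t0 - T := sub_nonneg.mpr ht0l
      positivity
    set c := x T / (1 + x T * (t0 - T)) with hc
    have hcpos : 0 < c := div_pos hx0 hden0
    have hlow : ∀ s ∈ Set.Ico T t0, c ≤ x s := by
      intro s hs
      have h1 : x T / (1 + x T * (s - T)) ≤ x s :=
        comp s hs.1 (lt_trans hs.2 ht0Tp)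
          (fun r hr => hpos' r ⟨hr.1, lt_of_le_of_lt hr.2 hs.2⟩) s ⟨hs.1, le_rfl⟩
      have hden1 : 0 < 1 + x T * (s - T) := by
        have : 0 ≤ s - T := sub_nonneg.mpr hs.1
        positivity
      have h2 : c ≤ x T / (1 + x T * (s - T)) := by
        rw [hc, div_le_div_iff₀ hden0 hden1]
        nlinarith [hs.2, mul_le_mul_of_nonneg_left hs.2.le (sq_nonneg (x T))]
      linarith
    have htend : Filter.Tendsto x (nhdsWithin t0 (Set.Iio t0)) (nhds (x t0)) :=
      ((hcont t0 ⟨ht0l, ht0Tp⟩).continuousWithinAt).tendsto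
    have hmem : Set.Ico T t0 ∈ nhdsWithin t0 (Set.Iio t0) := by
      apply mem_nhdsWithin.mpr
      exact ⟨Set.Ioi T, isOpen_Ioi, hTt0, fun y hy => ⟨le_of_lt hy.1, hy.2⟩⟩
    have hxc : c ≤ x t0 :=
      ge_of_tendsto htend (Filter.eventually_iff_exists_mem.mpr ⟨_, hmem, fun y hy => hlow y hy⟩)
    linarith
  -- main conclusion
  intro t ht
  have h1 : x T / (1 + x T * (t - T)) ≤ x t :=
    comp t ht.1 ht.2 (fun s hs => hposall s ⟨hs.1, lt_of_le_of_lt hs.2 ht.2⟩) t ⟨ht.1, le_rfl⟩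
  have hD : 0 < Tp - T := sub_pos.mpr hT
  have hminpos : 0 < min (x T) (1 / (Tp - T)) := lt_min hx0 (by positivity)
  refine ⟨h1, ?_, by positivity⟩
  have hden : 0 < 1 + x T * (t - T) := by
    have : 0 ≤ t - T := sub_nonneg.mpr ht.1
    positivity
  rw [le_div_iff₀ hden]
  have hm1 : min (x T) (1 / (Tp - T)) ≤ x T := min_le_left _ _
  have hm2 : min (x T) (1 / (Tp - T)) * (Tp - T) ≤ 1 := by
    have := min_le_right (x T) (1 / (Tp - T))
    rw [← le_div_iff₀ hD]
    exact this
  have hd : t - T < Tp - T := by linarith [ht.2]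
  nlinarith [mul_le_mul_of_nonneg_left hd.le (mul_pos hminpos hx0).le,
    mul_le_mul_of_nonneg_right hm2 hx0.le, hminpos.le]
end

section
/- Fix points a ≠ b in a finite-dimensional real inner product space V, a linear subspace W ⊆ V with a ∉ W and b ∉ W, and constants E_1, E_2 > 0. Then the function f : W → ℝ, f(x) = √E_1 ‖a − x‖ + √E_2 ‖x − b‖, has a unique minimiser on W. -/
/-- Unique minimiser of `x ↦ √E₁‖a − x‖ + √E₂‖x − b‖` on a subspace `W`
with `a, b ∉ W`. -/
theorem unique_minimiser_broken_ray
    (V : Type*) [NormedAddCommGroup V] [InnerProductSpace ℝ V]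
    [FiniteDimensional ℝ V]
    (W : Submodule ℝ V) (a b : V) (hab : a ≠ b)
    (ha : a ∉ W) (hb : b ∉ W)
    (E₁ E₂ : ℝ) (hE₁ : 0 < E₁) (hE₂ : 0 < E₂) :
    ∃! x : W, ∀ y : W,
      Real.sqrt E₁ * ‖a - (x : V)‖ + Real.sqrt E₂ * ‖(x : V) - b‖ ≤
      Real.sqrt E₁ * ‖a - (y : V)‖ + Real.sqrt E₂ * ‖(y : V) - b‖ := by
  have hE₁' : 0 < Real.sqrt E₁ := Real.sqrt_pos.2 hE₁
  have hE₂' : 0 < Real.sqrt E₂ := Real.sqrt_pos.2 hE₂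
  set f : W → ℝ := fun x => Real.sqrt E₁ * ‖a - (x : V)‖ + Real.sqrt E₂ * ‖(x : V) - b‖
    with hfdef
  have hcont : Continuous f := by
    apply Continuous.add
    · exact (continuous_const.mul ((continuous_const.sub continuous_subtype_val).norm))
    · exact (continuous_const.mul ((continuous_subtype_val.sub continuous_const).norm))
  have hcoer : Filter.Tendsto f (Filter.cocompact W) Filter.atTop := by
    have h1 : Filter.Tendsto (fun x : W => ‖x‖) (Filter.cocompact W) Filter.atTop :=
      tendsto_norm_cocompact_atTop
    have h2 : Filter.Tendsto (fun x : W => Real.sqrt E₂ * (‖x‖ - ‖b‖))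
        (Filter.cocompact W) Filter.atTop :=
      (Filter.tendsto_atTop_add_const_right _ _ h1).const_mul_atTop hE₂'
    refine Filter.tendsto_atTop_mono (fun x => ?_) h2
    have h3 : ‖x‖ - ‖b‖ ≤ ‖(x : V) - b‖ := by
      have := norm_sub_norm_le (x : V) b
      simpa using this
    have h4 := mul_le_mul_of_nonneg_left h3 hE₂'.le
    have h5 : 0 ≤ Real.sqrt E₁ * ‖a - (x : V)‖ :=
      mul_nonneg hE₁'.le (norm_nonneg _)
    simp only [hfdef]
    linarith
  obtain ⟨x₀, hx₀⟩ := hcont.exists_forall_le hcoer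
  refine ⟨x₀, hx₀, fun y hy => ?_⟩
  -- y is also a minimiser; show y = x₀
  have hfeq : f y = f x₀ := le_antisymm (hy x₀) (hx₀ y)
  set m : W := (2:ℝ)⁻¹ • (y + x₀) with hm
  have hmV : (m : V) = (2:ℝ)⁻¹ • ((y : V) + (x₀ : V)) := rfl
  have hma : a - (m : V) = (2:ℝ)⁻¹ • ((a - y) + (a - x₀)) := by
    rw [hmV]; module
  have hmb : (m : V) - b = (2:ℝ)⁻¹ • (((y : V) - b) + ((x₀ : V) - b)) := by
    rw [hmV]; module
  have hA : ‖a - (m : V)‖ = (2:ℝ)⁻¹ * ‖(a - (y:V)) + (a - (x₀:V))‖ := by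
    rw [hma, norm_smul]; norm_num
  have hB : ‖(m : V) - b‖ = (2:ℝ)⁻¹ * ‖((y:V) - b) + ((x₀:V) - b)‖ := by
    rw [hmb, norm_smul]; norm_num
  have htriA : ‖(a - (y:V)) + (a - (x₀:V))‖ ≤ ‖a - (y:V)‖ + ‖a - (x₀:V)‖ := norm_add_le _ _
  have htriB : ‖((y:V) - b) + ((x₀:V) - b)‖ ≤ ‖(y:V) - b‖ + ‖(x₀:V) - b‖ := norm_add_le _ _
  have hym : f y ≤ f m := hy m
  have hxy : f x₀ ≤ f y := hx₀ y
  have heqA : ‖(a - (y:V)) + (a - (x₀:V))‖ = ‖a - (y:V)‖ + ‖a - (x₀:V)‖ := by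
    by_contra hne
    have hlt : ‖(a - (y:V)) + (a - (x₀:V))‖ < ‖a - (y:V)‖ + ‖a - (x₀:V)‖ :=
      lt_of_le_of_ne htriA hne
    have hfm : f m < (f y + f x₀) / 2 := by
      simp only [hfdef, hA, hB]
      nlinarith [mul_le_mul_of_nonneg_left htriB hE₂'.le,
        mul_lt_mul_of_pos_left hlt hE₁']
    have hxm : f x₀ ≤ f m := le_trans hxy hym
    rw [hfeq] at hfm
    simp only [hfdef] at hxm hfm
    linarith
  have hsr : SameRay ℝ (a - (y:V)) (a - (x₀:V)) := by
    rw [sameRay_iff_norm_add]; exact heqA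
  have hny : a - (y:V) ≠ 0 := sub_ne_zero.2 (fun h => ha (h ▸ y.2))
  have hnx : a - (x₀:V) ≠ 0 := sub_ne_zero.2 (fun h => ha (h ▸ x₀.2))
  obtain ⟨r, s, hr, hs, hrs⟩ := hsr.exists_pos hny hnx
  by_cases hrseq : r = s
  · subst hrseq
    have : a - (y:V) = a - (x₀:V) := smul_right_injective V hr.ne' hrs
    exact Subtype.ext (sub_right_injective this)
  · exfalso
    have hkey : (r - s) • a = r • (y:V) - s • (x₀:V) := by
      have := hrs
      rw [smul_sub, smul_sub] at this
      rw [sub_smul]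
      linear_combination (norm := module) this
    have hmem : (r - s) • a ∈ W := hkey ▸ W.sub_mem (W.smul_mem _ y.2) (W.smul_mem _ x₀.2)
    have : a ∈ W := by
      have h := W.smul_mem (r - s)⁻¹ hmem
      rwa [inv_smul_smul₀ (sub_ne_zero.2 hrseq)] at h
    exact ha this
end
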